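/- For the problem of estimating the mean of a distribution on [0,1] from n iid observations, the estimator d₀(X) = (μ + √n · X̄)/(1 + √n) satisfies: for every prior π with ∫ Ψ(P) dπ(P) = μ, the Bayes risk r(d₀, π) = ∫ E_P[(d₀(X) − Ψ(P))²] dπ(P) is at most μ(1−μ)/(1+√n)², with equality when π is supported on Bernoulli distributions. -/

import Mathlib

open MeasureTheory

/-- The Bernoulli distribution on `ℝ` with success probability `θ`. -/
noncomputable def bern (θ : ℝ) : Measure ℝ :=
  ENNReal.ofReal (1 - θ) • Measure.dirac 0 + ENNReal.ofReal θ • Measure.dirac 1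

/-!
Given `P`, the estimator is affine in the sample sum, so its risk is variance plus squared bias:
`(Var_P(X₁) + (μ - Ψ(P))²) / (1 + √n)²`. For `P` on `[0,1]` the Bhatia–Davis inequality gives
`Var_P(X₁) ≤ Ψ(P)(1 - Ψ(P))`, with equality for Bernoulli laws, and
`Ψ(1 - Ψ) + (μ - Ψ)² = μ² + (1 - 2μ)Ψ` is affine in `Ψ`, so its `π`-average is `μ(1 - μ)`.
-/

open ProbabilityTheory

lemma integral_sub_const_sq {Ω : Type*} [MeasurableSpace Ω] {ν : Measure Ω}
    [IsProbabilityMeasure ν] {Y : Ω → ℝ} (hY : MemLp Y 2 ν) (c : ℝ) :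
    ∫ ω, (Y ω - c) ^ 2 ∂ν = Var[Y; ν] + (ν[Y] - c) ^ 2 := by
  have hYc : MemLp (fun ω => Y ω - c) 2 ν := hY.sub (memLp_const c)
  rw [← variance_sub_const hY.aestronglyMeasurable c, variance_eq_sub hYc,
    integral_sub (hY.integrable one_le_two) (integrable_const c)]
  simp

section SampleSum

variable {ι : Type*} [Fintype ι] {P : Measure ℝ} [IsProbabilityMeasure P]

lemma integral_sum_pi (hP : Integrable id P) :
    ∫ x : ι → ℝ, ∑ i, x i ∂Measure.pi (fun _ => P) = Fintype.card ι * ∫ t, t ∂P := by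
  rw [integral_finsetSum (f := fun i (x : ι → ℝ) => x i) _ fun i _ => integrable_eval hP]
  simp [integral_eval]

lemma memLp_sum_pi (hP : MemLp id 2 P) :
    MemLp (fun x : ι → ℝ => ∑ i, x i) 2 (Measure.pi fun _ => P) :=
  memLp_finsetSum _ fun i _ => hP.comp_measurePreserving (measurePreserving_eval _ i)

lemma variance_sum_pi_id (hP : MemLp id 2 P) :
    Var[fun x : ι → ℝ => ∑ i, x i; Measure.pi fun _ => P] = Fintype.card ι * Var[id; P] := by
  simpa [Finset.sum_fn] using
    variance_sum_pi (μ := fun _ : ι => P) (X := fun _ => id) fun _ => hP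

lemma integral_affine_sum_pi_sub_sq (hP : MemLp id 2 P) (a b c : ℝ) :
    ∫ x : ι → ℝ, (a + b * ∑ i, x i - c) ^ 2 ∂(Measure.pi fun _ => P)
      = b ^ 2 * (Fintype.card ι * Var[id; P])
        + (a + b * (Fintype.card ι * ∫ t, t ∂P) - c) ^ 2 := by
  have hS := memLp_sum_pi (ι := ι) hP
  have hY : MemLp (fun x : ι → ℝ => a + b * ∑ i, x i) 2 (Measure.pi fun _ => P) :=
    (memLp_const a).add (hS.const_mul b)
  rw [integral_sub_const_sq hY, variance_const_add (hS.const_mul b).aestronglyMeasurable,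
    variance_const_mul, variance_sum_pi_id hP,
    integral_add (integrable_const a) ((hS.integrable one_le_two).const_mul b),
    integral_const_mul, integral_sum_pi (hP.integrable one_le_two)]
  simp

end SampleSum

/-- The squared-error risk at `P` of `d₀(X) = (μ + √n X̄) / (1 + √n)`. -/
noncomputable def shrinkageRisk (n : ℕ) (μ : ℝ) (P : Measure ℝ) : ℝ :=
  ∫ x : Fin n → ℝ, ((μ + √n * ((∑ i, x i) / n)) / (1 + √n) - ∫ s, s ∂P) ^ 2
    ∂(Measure.pi fun _ => P)

section ShrinkageRisk

variable {n : ℕ} {μ : ℝ} {P : Measure ℝ} [IsProbabilityMeasure P]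

lemma shrinkageRisk_eq (hn : n ≠ 0) (hP : MemLp id 2 P) :
    shrinkageRisk n μ P = (Var[id; P] + (μ - ∫ s, s ∂P) ^ 2) / (1 + √n) ^ 2 := by
  set s := √(n : ℝ) with hs_def
  have hs : 0 < s := Real.sqrt_pos.2 (Nat.cast_pos.2 (Nat.pos_of_ne_zero hn))
  have hsq : (n : ℝ) = s ^ 2 := (Real.sq_sqrt n.cast_nonneg).symm
  have hd : ∀ x : Fin n → ℝ, (μ + s * ((∑ i, x i) / n)) / (1 + s)
      = μ / (1 + s) + 1 / (s * (1 + s)) * ∑ i, x i := by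
    intro x
    rw [hsq]
    field_simp
  simp only [shrinkageRisk, ← hs_def, hd]
  rw [integral_affine_sum_pi_sub_sq hP, Fintype.card_fin, hsq]
  field_simp
  ring

lemma shrinkageRisk_le (hn : n ≠ 0) (hP : ∀ᵐ x ∂P, x ∈ Set.Icc (0 : ℝ) 1) :
    shrinkageRisk n μ P
      ≤ ((∫ s, s ∂P) * (1 - ∫ s, s ∂P) + (μ - ∫ s, s ∂P) ^ 2) / (1 + √n) ^ 2 := by
  rw [shrinkageRisk_eq hn (memLp_of_bounded hP aestronglyMeasurable_id 2)]
  have h : Var[id; P] ≤ (1 - ∫ s, s ∂P) * (∫ s, s ∂P - 0) :=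
    variance_le_sub_mul_sub hP aemeasurable_id
  gcongr
  linarith

end ShrinkageRisk

section Bernoulli

variable {θ : ℝ}

lemma integral_bern (hθ : θ ∈ Set.Icc (0 : ℝ) 1) (f : ℝ → ℝ) :
    ∫ x, f x ∂bern θ = (1 - θ) * f 0 + θ * f 1 := by
  have hdirac : ∀ a : ℝ, Integrable f (Measure.dirac a) := fun a => integrable_dirac enorm_lt_top
  rw [bern, integral_add_measure ((hdirac 0).smul_measure ENNReal.ofReal_ne_top)
      ((hdirac 1).smul_measure ENNReal.ofReal_ne_top),
    integral_smul_measure, integral_smul_measure, integral_dirac, integral_dirac,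
    ENNReal.toReal_ofReal (sub_nonneg.2 hθ.2), ENNReal.toReal_ofReal hθ.1, smul_eq_mul, smul_eq_mul]

lemma integral_id_bern (hθ : θ ∈ Set.Icc (0 : ℝ) 1) : ∫ x, x ∂bern θ = θ := by
  simp [integral_bern hθ]

lemma variance_id_bern (hθ : θ ∈ Set.Icc (0 : ℝ) 1) : Var[id; bern θ] = θ * (1 - θ) := by
  rw [variance_eq_integral aemeasurable_id]
  simp only [id, integral_id_bern hθ, integral_bern hθ]
  ring

end Bernoulli

lemma integral_mul_one_sub_add_sq {Ω : Type*} [MeasurableSpace Ω] {ν : Measure Ω}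
    [IsProbabilityMeasure ν] {f : Ω → ℝ} {c : ℝ} (hf : Integrable f ν) (hmean : ν[f] = c) :
    Integrable (fun ω => f ω * (1 - f ω) + (c - f ω) ^ 2) ν ∧
      ∫ ω, (f ω * (1 - f ω) + (c - f ω) ^ 2) ∂ν = c * (1 - c) := by
  have h : (fun ω => f ω * (1 - f ω) + (c - f ω) ^ 2) = fun ω => c ^ 2 + (1 - 2 * c) * f ω := by
    ext ω
    ring
  rw [h]
  refine ⟨(integrable_const _).add (hf.const_mul _), ?_⟩
  rw [integral_add (integrable_const _) (hf.const_mul _), integral_const_mul, hmean]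
  simp only [integral_const, probReal_univ, smul_eq_mul, one_mul]
  ring

theorem stmt15_general (n : ℕ) (hn : 0 < n) (μ : ℝ)
    (π : Measure (Measure ℝ)) [IsProbabilityMeasure π]
    (hprob : ∀ᵐ P ∂π, IsProbabilityMeasure P ∧ P ((Set.Icc (0 : ℝ) 1)ᶜ) = 0)
    (hmean : ∫ P, (∫ x, x ∂P) ∂π = μ)
    (hintmean : Integrable (fun P : Measure ℝ => ∫ x, x ∂P) π)
    (hintrisk : Integrable (fun P : Measure ℝ =>
      ∫ x : Fin n → ℝ,
        ((μ + Real.sqrt n * ((∑ i, x i) / n)) / (1 + Real.sqrt n) - ∫ s, s ∂P) ^ 2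
        ∂(Measure.pi fun _ : Fin n => P)) π) :
    (∫ P, (∫ x : Fin n → ℝ,
        ((μ + Real.sqrt n * ((∑ i, x i) / n)) / (1 + Real.sqrt n) - ∫ s, s ∂P) ^ 2
        ∂(Measure.pi fun _ : Fin n => P)) ∂π)
      ≤ μ * (1 - μ) / (1 + Real.sqrt n) ^ 2 ∧
    ((∀ᵐ P ∂π, ∃ θ ∈ Set.Icc (0 : ℝ) 1, P = bern θ) →
      (∫ P, (∫ x : Fin n → ℝ,
        ((μ + Real.sqrt n * ((∑ i, x i) / n)) / (1 + Real.sqrt n) - ∫ s, s ∂P) ^ 2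
        ∂(Measure.pi fun _ : Fin n => P)) ∂π)
      = μ * (1 - μ) / (1 + Real.sqrt n) ^ 2) := by
  change Integrable (shrinkageRisk n μ) π at hintrisk
  change ∫ P, shrinkageRisk n μ P ∂π ≤ _ ∧ (_ → ∫ P, shrinkageRisk n μ P ∂π = _)
  obtain ⟨hint, hval⟩ := integral_mul_one_sub_add_sq hintmean hmean
  rw [← hval, ← integral_div]
  constructor
  · refine integral_mono_ae hintrisk (hint.div_const _) ?_
    filter_upwards [hprob] with P ⟨hP, hsupp⟩
    exact shrinkageRisk_le hn.ne' (mem_ae_iff.2 hsupp)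
  · intro hbern
    refine integral_congr_ae ?_
    filter_upwards [hprob, hbern] with P ⟨hP, hsupp⟩ hPθ
    obtain ⟨θ, hθ, rfl⟩ := hPθ
    rw [shrinkageRisk_eq hn.ne' (memLp_of_bounded (mem_ae_iff.2 hsupp) aestronglyMeasurable_id 2),
      variance_id_bern hθ, integral_id_bern hθ]

/-- For estimating the mean `Ψ(P) = ∫ x dP` of a distribution `P` on
`[0,1]` from `n` iid observations, the estimator `d₀(X) = (μ + √n·X̄)/(1+√n)` has Bayes
risk at most `μ(1-μ)/(1+√n)²` for every prior `π` with `∫ Ψ(P) dπ(P) = μ`, with equality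
when `π` is supported on Bernoulli distributions. -/
theorem stmt15 (n : ℕ) (hn : 0 < n) (μ : ℝ) (hμ : μ ∈ Set.Ioo (0 : ℝ) 1)
    (π : Measure (Measure ℝ)) [IsProbabilityMeasure π]
    (hprob : ∀ᵐ P ∂π, IsProbabilityMeasure P ∧ P ((Set.Icc (0 : ℝ) 1)ᶜ) = 0)
    (hmean : ∫ P, (∫ x, x ∂P) ∂π = μ)
    (hintmean : Integrable (fun P : Measure ℝ => ∫ x, x ∂P) π)
    (hintrisk : Integrable (fun P : Measure ℝ =>
      ∫ x : Fin n → ℝ,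
        ((μ + Real.sqrt n * ((∑ i, x i) / n)) / (1 + Real.sqrt n) - ∫ s, s ∂P) ^ 2
        ∂(Measure.pi fun _ : Fin n => P)) π) :
    (∫ P, (∫ x : Fin n → ℝ,
        ((μ + Real.sqrt n * ((∑ i, x i) / n)) / (1 + Real.sqrt n) - ∫ s, s ∂P) ^ 2
        ∂(Measure.pi fun _ : Fin n => P)) ∂π)
      ≤ μ * (1 - μ) / (1 + Real.sqrt n) ^ 2 ∧
    ((∀ᵐ P ∂π, ∃ θ ∈ Set.Icc (0 : ℝ) 1, P = bern θ) →
      (∫ P, (∫ x : Fin n → ℝ,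
        ((μ + Real.sqrt n * ((∑ i, x i) / n)) / (1 + Real.sqrt n) - ∫ s, s ∂P) ^ 2
        ∂(Measure.pi fun _ : Fin n => P)) ∂π)
      = μ * (1 - μ) / (1 + Real.sqrt n) ^ 2) :=
  stmt15_general n hn μ π hprob hmean hintmean hintrisk
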